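/- Let λ, μ > 0 and fix k ∈ ℤ. For every n ∈ ℤ the function t ↦ p_{k,n}(t;λ,μ) is differentiable on [0,∞), the initial condition p_{k,n}(0;λ,μ) = δ_{n,k} (Kronecker delta) holds, and for every t ≥ 0 and every n ∈ ℤ the Kolmogorov forward equations hold: (d/dt) p_{k,2n}(t;λ,μ) = μ·p_{k,2n−1}(t;λ,μ) − 2λ·p_{k,2n}(t;λ,μ) + μ·p_{k,2n+1}(t;λ,μ) and (d/dt) p_{k,2n+1}(t;λ,μ) = λ·p_{k,2n}(t;λ,μ) − 2μ·p_{k,2n+1}(t;λ,μ) + λ·p_{k,2n+2}(t;λ,μ). -/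

import Mathlib

open scoped BigOperators

/-- Inner binomial sum `∑_{k=0}^{n-m} C(n,k) C(n,k+m) ρ^{-2k-m}`. -/
noncomputable def innerSum (ρ : ℝ) (m n : ℕ) : ℝ :=
  ∑ k ∈ Finset.range (n - m + 1),
    (n.choose k : ℝ) * (n.choose (k + m) : ℝ) * ρ ^ (-(2 * (k : ℤ) + (m : ℤ)))

/-- Series `∑_{n≥m} [x^{2n}/(2n)! + c·x^{2n+1}/(2n+1)!]·innerSum ρ m n`. -/
noncomputable def evenSeries (x c ρ : ℝ) (m : ℕ) : ℝ :=
  ∑' j : ℕ,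
    ((x ^ (2 * (m + j)) / (2 * (m + j)).factorial) +
      c * (x ^ (2 * (m + j) + 1) / (2 * (m + j) + 1).factorial)) * innerSum ρ m (m + j)

/-- Series `∑_{n≥m} x^{2n+1}/(2n+1)!·innerSum ρ m n`. -/
noncomputable def oddSeries (x ρ : ℝ) (m : ℕ) : ℝ :=
  ∑' j : ℕ,
    (x ^ (2 * (m + j) + 1) / (2 * (m + j) + 1).factorial) * innerSum ρ m (m + j)

/-- `p_{2l,2r}(t;λ,μ)`. -/
noncomputable def pEE (lam mu t : ℝ) (l r : ℤ) : ℝ :=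
  Real.exp (-(lam + mu) * t) *
    evenSeries (lam * t) ((mu - lam) / lam) (lam / mu) (r - l).natAbs

/-- `p_{2l,2r+1}(t;λ,μ)`. -/
noncomputable def pEO (lam mu t : ℝ) (l r : ℤ) : ℝ :=
  Real.exp (-(lam + mu) * t) *
    (oddSeries (lam * t) (lam / mu) (r - l).natAbs +
      oddSeries (lam * t) (lam / mu) (r - l + 1).natAbs)

/-- `p_{2l+1,2r}(t;λ,μ)`. -/
noncomputable def pOE (lam mu t : ℝ) (l r : ℤ) : ℝ :=
  Real.exp (-(lam + mu) * t) *
    (oddSeries (mu * t) (mu / lam) (r - l - 1).natAbs +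
      oddSeries (mu * t) (mu / lam) (r - l).natAbs)

/-- `p_{2l+1,2r+1}(t;λ,μ)`. -/
noncomputable def pOO (lam mu t : ℝ) (l r : ℤ) : ℝ :=
  Real.exp (-(lam + mu) * t) *
    evenSeries (mu * t) ((lam - mu) / mu) (mu / lam) (r - l).natAbs

/-- Transition probability `p_{k,n}(t;λ,μ)`, by parity of the states. -/
noncomputable def transP (lam mu t : ℝ) (k n : ℤ) : ℝ :=
  if k % 2 = 0 then
    if n % 2 = 0 then pEE lam mu t (k / 2) (n / 2)
    else pEO lam mu t (k / 2) ((n - 1) / 2)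
  else
    if n % 2 = 0 then pOE lam mu t ((k - 1) / 2) (n / 2)
    else pOO lam mu t ((k - 1) / 2) ((n - 1) / 2)

/-- `h(z) = √((μz²+λ)(λz²+μ))`. -/
noncomputable def hFun (lam mu z : ℝ) : ℝ := Real.sqrt ((mu * z ^ 2 + lam) * (lam * z ^ 2 + mu))

/-!
Write `p_{0,n}(t) = e^{-(λ+μ)t} ∑ᵢ cₙ(i) tⁱ/i!`. Since `|cₙ(i)| ≤ 2(λ+μ)ⁱ` the series can be
differentiated termwise, and the forward equations become the coefficient recurrences
`c₂ₙ(i+1) = (μ-λ) c₂ₙ(i) + μ (c₂ₙ₋₁(i) + c₂ₙ₊₁(i))`, and the same with `λ`, `μ` exchanged at odd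
states. Read off from the explicit series, the coefficients are built from
`U_m(j) = ∑ₖ C(j,k) C(j,k+m) q^{2k+m}` with `q = μ/λ`, the coefficient of `z^m` in
`((1+qz)(1+q/z))^j`. Multiplying by `(1+qz)(1+q/z) = 1 + q² + q(z + 1/z)` gives
`U_m(j+1) = (1+q²) U_m(j) + q (U_{m-1}(j) + U_{m+1}(j))` with `U_{-1} = U_1`, which is the
required recurrence. Finally `p_{k,n}` depends only on `n - k`, and an odd starting state behaves
like state `0` with `λ` and `μ` exchanged.
-/

open Finset

theorem tsum_add_left_eq_of_lt {M : Type*} [AddCommMonoid M] [TopologicalSpace M] {f : ℕ → M}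
    {m : ℕ} (h : ∀ n < m, f n = 0) : ∑' j, f (m + j) = ∑' n, f n :=
  (add_right_injective m).tsum_eq fun n hn =>
    ⟨n - m, Nat.add_sub_cancel' (not_lt.1 fun hlt => hn (h n hlt))⟩

section ChoosePairSum

variable {R : Type*} [CommSemiring R]

noncomputable def choosePairSum (q : R) (m n : ℕ) : R :=
  ∑ k ∈ range (n + 1), (n.choose k : R) * (n.choose (k + m) * q ^ (2 * k + m))

theorem sum_range_choose_succ_mul (f : ℕ → R) (n : ℕ) :
    ∑ k ∈ range (n + 1 + 1), ((n + 1).choose k : R) * f k =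
      ∑ k ∈ range (n + 1), (n.choose k : R) * (f k + f (k + 1)) := by
  simp only [mul_add, sum_add_distrib]
  exact sum_choose_succ_mul (fun k _ => f k) n

theorem choosePairSum_succ_succ (q : R) (m n : ℕ) :
    choosePairSum q (m + 1) (n + 1) =
      (1 + q ^ 2) * choosePairSum q (m + 1) n +
        q * (choosePairSum q m n + choosePairSum q (m + 2) n) := by
  simp only [choosePairSum, sum_range_choose_succ_mul, mul_sum, ← sum_add_distrib]
  refine sum_congr rfl fun k _ => ?_
  rw [show k + 1 + (m + 1) = (k + m + 1) + 1 by ring, show k + (m + 1) = (k + m) + 1 by ring,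
    Nat.choose_succ_succ', Nat.choose_succ_succ']
  push_cast
  ring_nf

theorem choosePairSum_zero_succ (q : R) (n : ℕ) :
    choosePairSum q 0 (n + 1) =
      (1 + q ^ 2) * choosePairSum q 0 n + 2 * q * choosePairSum q 1 n := by
  have hmixed : ∑ k ∈ range (n + 1), (n.choose k : R) * ((n + 1).choose k * q ^ (2 * k)) =
      choosePairSum q 0 n + q * choosePairSum q 1 n := by
    calc _ = ∑ k ∈ range (n + 1 + 1), ((n + 1).choose k : R) * (n.choose k * q ^ (2 * k)) := by
          rw [sum_range_succ _ (n + 1), Nat.choose_succ_self]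
          simp only [Nat.cast_zero, zero_mul, mul_zero, add_zero, mul_left_comm]
      _ = _ := by
          simp only [sum_range_choose_succ_mul, choosePairSum, add_zero, mul_sum,
            ← sum_add_distrib]
          refine sum_congr rfl fun k _ => ?_
          ring
  have hshift :
      ∑ k ∈ range (n + 1), (n.choose k : R) * ((n + 1).choose (k + 1) * q ^ (2 * (k + 1))) =
        q ^ 2 * choosePairSum q 0 n + q * choosePairSum q 1 n := by
    simp only [choosePairSum, add_zero, Nat.choose_succ_succ', mul_sum, ← sum_add_distrib]
    refine sum_congr rfl fun k _ => ?_
    push_cast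
    ring
  conv_lhs => rw [choosePairSum]
  simp only [add_zero]
  rw [sum_range_choose_succ_mul]
  simp only [mul_add (R := R), sum_add_distrib, hmixed, hshift]
  ring

theorem choosePairSum_natAbs_succ (q : R) (d : ℤ) (n : ℕ) :
    choosePairSum q d.natAbs (n + 1) = (1 + q ^ 2) * choosePairSum q d.natAbs n +
      q * (choosePairSum q (d - 1).natAbs n + choosePairSum q (d + 1).natAbs n) := by
  rcases lt_trichotomy d 0 with hd | rfl | hd
  · obtain ⟨m, hm⟩ : ∃ m : ℕ, d = -(m + 1) := ⟨(-d - 1).toNat, by omega⟩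
    rw [show d.natAbs = m + 1 by omega, show (d - 1).natAbs = m + 2 by omega,
      show (d + 1).natAbs = m by omega, choosePairSum_succ_succ, add_comm (choosePairSum q m n)]
  · rw [show (0 - 1 : ℤ).natAbs = 1 by rfl, show (0 + 1 : ℤ).natAbs = 1 by rfl,
      Int.natAbs_zero, choosePairSum_zero_succ]
    ring
  · obtain ⟨m, hm⟩ : ∃ m : ℕ, d = m + 1 := ⟨(d - 1).toNat, by omega⟩
    rw [show d.natAbs = m + 1 by omega, show (d - 1).natAbs = m by omega,
      show (d + 1).natAbs = m + 2 by omega, choosePairSum_succ_succ]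

theorem choosePairSum_of_lt (q : R) {m n : ℕ} (h : n < m) : choosePairSum q m n = 0 :=
  sum_eq_zero fun k _ => by simp [Nat.choose_eq_zero_of_lt (show n < k + m by omega)]

theorem choosePairSum_zero_right (q : R) (m : ℕ) :
    choosePairSum q m 0 = if m = 0 then 1 else 0 := by
  rcases m with _ | m
  · simp [choosePairSum]
  · simp [choosePairSum_of_lt]

end ChoosePairSum

theorem choose_mul_pow_le_one_add_pow {q : ℝ} (hq : 0 ≤ q) (n j : ℕ) :
    (n.choose j : ℝ) * q ^ j ≤ (1 + q) ^ n := by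
  rcases le_or_gt j n with hj | hj
  · rw [add_comm, add_pow]
    refine le_of_eq_of_le ?_ (single_le_sum (f := fun k => q ^ k * 1 ^ (n - k) * n.choose k)
      (fun k _ => by positivity) (mem_range.2 (Nat.lt_succ_of_le hj)))
    simp [mul_comm]
  · simp [Nat.choose_eq_zero_of_lt hj]
    positivity

theorem choosePairSum_nonneg {q : ℝ} (hq : 0 ≤ q) (m n : ℕ) : 0 ≤ choosePairSum q m n :=
  sum_nonneg fun _ _ => by positivity

theorem choosePairSum_le {q : ℝ} (hq : 0 ≤ q) (m n : ℕ) :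
    choosePairSum q m n ≤ (1 + q) ^ (2 * n) := by
  calc choosePairSum q m n
      = ∑ k ∈ range (n + 1), (n.choose k : ℝ) * q ^ k * (n.choose (k + m) * q ^ (k + m)) :=
        sum_congr rfl fun k _ => by ring
    _ ≤ ∑ k ∈ range (n + 1), (n.choose k : ℝ) * q ^ k * (1 + q) ^ n :=
        sum_le_sum fun k _ => by gcongr; exact choose_mul_pow_le_one_add_pow hq n (k + m)
    _ = (1 + q) ^ n * (1 + q) ^ n := by
        rw [← sum_mul, add_comm 1 q, add_pow]
        simp [mul_comm]
    _ = (1 + q) ^ (2 * n) := by ring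

theorem innerSum_eq_choosePairSum (ρ : ℝ) (m n : ℕ) :
    innerSum ρ m n = choosePairSum ρ⁻¹ m n := by
  rw [innerSum, choosePairSum,
    ← sum_subset (range_subset_range.2 (by omega : n - m + 1 ≤ n + 1))]
  · refine sum_congr rfl fun k _ => ?_
    rw [show -(2 * (k : ℤ) + m) = -((2 * k + m : ℕ) : ℤ) by push_cast; ring, zpow_neg,
      zpow_natCast, inv_pow, mul_assoc]
  · intro k _ hk
    simp [Nat.choose_eq_zero_of_lt (show n < k + m by simp at hk; omega)]

theorem innerSum_of_lt (ρ : ℝ) {m n : ℕ} (h : n < m) : innerSum ρ m n = 0 := by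
  rw [innerSum_eq_choosePairSum, choosePairSum_of_lt _ h]

theorem evenSeries_eq_tsum (x c ρ : ℝ) (m : ℕ) :
    evenSeries x c ρ m = ∑' n, (x ^ (2 * n) / (2 * n).factorial +
      c * (x ^ (2 * n + 1) / (2 * n + 1).factorial)) * innerSum ρ m n := by
  rw [evenSeries, eq_comm]
  exact (tsum_add_left_eq_of_lt fun _ h => by rw [innerSum_of_lt ρ h, mul_zero]).symm

theorem oddSeries_eq_tsum (x ρ : ℝ) (m : ℕ) :
    oddSeries x ρ m = ∑' n, x ^ (2 * n + 1) / (2 * n + 1).factorial * innerSum ρ m n := by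
  rw [oddSeries, eq_comm]
  exact (tsum_add_left_eq_of_lt fun _ h => by rw [innerSum_of_lt ρ h, mul_zero]).symm

section ExpGeneratingFunction

noncomputable def egf (a : ℕ → ℝ) (t : ℝ) : ℝ := ∑' i, a i * t ^ i / i.factorial

def IsExpBounded (a : ℕ → ℝ) : Prop := ∃ C R : ℝ, ∀ n, |a n| ≤ C * R ^ n

variable {a : ℕ → ℝ}

theorem IsExpBounded.exists_nonneg (ha : IsExpBounded a) :
    ∃ C R : ℝ, 0 ≤ C ∧ 0 ≤ R ∧ ∀ n, |a n| ≤ C * R ^ n := by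
  obtain ⟨C, R, h⟩ := ha
  refine ⟨|C|, |R|, abs_nonneg C, abs_nonneg R, fun n => (h n).trans ?_⟩
  rw [← abs_pow, ← abs_mul]
  exact le_abs_self _

theorem IsExpBounded.summable (ha : IsExpBounded a) (t : ℝ) :
    Summable fun i => a i * t ^ i / i.factorial := by
  obtain ⟨C, R, -, -, h⟩ := ha.exists_nonneg
  refine .of_norm_bounded ((Real.summable_pow_div_factorial (R * |t|)).mul_left C) fun i => ?_
  rw [Real.norm_eq_abs, abs_div, abs_mul, abs_pow, Nat.abs_cast, mul_pow, ← mul_div_assoc,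
    ← mul_assoc]
  gcongr
  exact h i

theorem egf_apply_zero : egf a 0 = a 0 := by
  rw [egf, tsum_eq_single 0 fun i hi => by simp [zero_pow hi]]
  simp

theorem egf_add {b : ℕ → ℝ} (ha : IsExpBounded a) (hb : IsExpBounded b) (t : ℝ) :
    egf (a + b) t = egf a t + egf b t := by
  rw [egf, egf, egf, ← (ha.summable t).tsum_add (hb.summable t)]
  exact tsum_congr fun i => by simp only [Pi.add_apply]; ring

theorem egf_add_add (α β γ : ℝ) {b c : ℕ → ℝ} (ha : IsExpBounded a) (hb : IsExpBounded b)
    (hc : IsExpBounded c) (t : ℝ) :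
    egf (fun i => α * a i + β * b i + γ * c i) t =
      α * egf a t + β * egf b t + γ * egf c t := by
  simp only [egf, ← tsum_mul_left]
  rw [← ((ha.summable t).mul_left α).tsum_add ((hb.summable t).mul_left β),
    ← (((ha.summable t).mul_left α).add ((hb.summable t).mul_left β)).tsum_add
      ((hc.summable t).mul_left γ)]
  exact tsum_congr fun i => by ring

theorem IsExpBounded.egf_eq_tsum_even_add_odd (ha : IsExpBounded a) (t : ℝ) :
    egf a t = ∑' j, (a (2 * j) * t ^ (2 * j) / (2 * j).factorial +
      a (2 * j + 1) * t ^ (2 * j + 1) / (2 * j + 1).factorial) := by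
  set f : ℕ → ℝ := fun i => a i * t ^ i / i.factorial
  have he : Summable fun j => f (2 * j) :=
    (ha.summable t).comp_injective (mul_right_injective₀ two_ne_zero)
  have ho : Summable fun j => f (2 * j + 1) :=
    (ha.summable t).comp_injective
      ((add_left_injective 1).comp (mul_right_injective₀ two_ne_zero))
  exact (tsum_even_add_odd he ho).symm.trans (he.tsum_add ho).symm

theorem IsExpBounded.hasDerivAt_egf (ha : IsExpBounded a) (t : ℝ) :
    HasDerivAt (egf a) (egf (fun i => a (i + 1)) t) t := by
  obtain ⟨C, R, hC, hR, h⟩ := ha.exists_nonneg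
  set r := |t| + 1
  have hsplit : egf a = fun s => a 0 + ∑' i, a (i + 1) * s ^ (i + 1) / (i + 1).factorial := by
    funext s
    rw [egf, (ha.summable s).tsum_eq_zero_add]
    simp
  have hterm : ∀ (i : ℕ) (y : ℝ),
      HasDerivAt (fun s => a (i + 1) * s ^ (i + 1) / (i + 1).factorial)
        (a (i + 1) * y ^ i / i.factorial) y := by
    intro i y
    refine (((hasDerivAt_pow (i + 1) y).const_mul (a (i + 1))).div_const _).congr_deriv ?_
    rw [Nat.factorial_succ]
    push_cast
    field_simp
  have hbound : ∀ (i : ℕ) (y : ℝ), y ∈ Metric.ball 0 r →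
      ‖a (i + 1) * y ^ i / i.factorial‖ ≤ C * R * ((R * r) ^ i / i.factorial) := by
    intro i y hy
    rw [mem_ball_zero_iff, Real.norm_eq_abs] at hy
    rw [Real.norm_eq_abs, abs_div, abs_mul, abs_pow, Nat.abs_cast]
    calc |a (i + 1)| * |y| ^ i / i.factorial ≤ C * R ^ (i + 1) * r ^ i / i.factorial := by
          gcongr
          exact h _
      _ = C * R * ((R * r) ^ i / i.factorial) := by rw [mul_pow, pow_succ]; ring
  rw [hsplit]
  refine HasDerivAt.const_add _ (hasDerivAt_tsum_of_isPreconnected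
    ((Real.summable_pow_div_factorial (R * r)).mul_left (C * R)) Metric.isOpen_ball
    (convex_ball 0 r).isPreconnected (fun i y _ => hterm i y) hbound
    (Metric.mem_ball_self (by positivity)) (by simp) (by simp [r]))

theorem hasDerivAt_exp_mul_egf_of_succ {b c : ℕ → ℝ} {κ α β γ : ℝ} (ha : IsExpBounded a)
    (hb : IsExpBounded b) (hc : IsExpBounded c)
    (hrec : ∀ i, a (i + 1) = α * a i + β * b i + γ * c i) (t : ℝ) :
    HasDerivAt (fun s => Real.exp (-κ * s) * egf a s)
      ((α - κ) * (Real.exp (-κ * t) * egf a t) + β * (Real.exp (-κ * t) * egf b t) +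
        γ * (Real.exp (-κ * t) * egf c t)) t := by
  have hexp : HasDerivAt (fun s => Real.exp (-κ * s)) (Real.exp (-κ * t) * -κ) t :=
    ((hasDerivAt_id t).const_mul (-κ)).exp.congr_deriv (by simp)
  refine (hexp.mul (ha.hasDerivAt_egf t)).congr_deriv ?_
  rw [show (fun i => a (i + 1)) = fun i => α * a i + β * b i + γ * c i from funext hrec,
    egf_add_add α β γ ha hb hc]
  ring

end ExpGeneratingFunction

section Coefficients

variable {lam mu : ℝ}

noncomputable def twoStepWeight (lam mu : ℝ) (m j : ℕ) : ℝ :=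
  lam ^ (2 * j) * choosePairSum (mu / lam) m j

theorem twoStepWeight_natAbs_succ (hlam : lam ≠ 0) (d : ℤ) (j : ℕ) :
    twoStepWeight lam mu d.natAbs (j + 1) = (lam ^ 2 + mu ^ 2) * twoStepWeight lam mu d.natAbs j +
      lam * mu *
        (twoStepWeight lam mu (d - 1).natAbs j + twoStepWeight lam mu (d + 1).natAbs j) := by
  simp only [twoStepWeight, choosePairSum_natAbs_succ]
  field_simp
  ring

theorem twoStepWeight_zero_right (lam mu : ℝ) (m : ℕ) :
    twoStepWeight lam mu m 0 = if m = 0 then 1 else 0 := by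
  simp [twoStepWeight, choosePairSum_zero_right]

theorem twoStepWeight_nonneg (hlam : 0 ≤ lam) (hmu : 0 ≤ mu) (m j : ℕ) :
    0 ≤ twoStepWeight lam mu m j :=
  mul_nonneg (by positivity) (choosePairSum_nonneg (by positivity) m j)

theorem twoStepWeight_le (hlam : 0 < lam) (hmu : 0 ≤ mu) (m j : ℕ) :
    twoStepWeight lam mu m j ≤ (lam + mu) ^ (2 * j) := by
  calc twoStepWeight lam mu m j ≤ lam ^ (2 * j) * (1 + mu / lam) ^ (2 * j) := by
        unfold twoStepWeight
        gcongr
        exact choosePairSum_le (by positivity) m j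
    _ = (lam + mu) ^ (2 * j) := by
        rw [← mul_pow]
        field_simp

noncomputable def evenCoeff (lam mu : ℝ) (m i : ℕ) : ℝ :=
  (if i % 2 = 0 then 1 else mu - lam) * twoStepWeight lam mu m (i / 2)

noncomputable def oddCoeff (lam mu : ℝ) (m i : ℕ) : ℝ :=
  if i % 2 = 0 then 0 else lam * twoStepWeight lam mu m (i / 2)

theorem evenCoeff_two_mul (m j : ℕ) :
    evenCoeff lam mu m (2 * j) = twoStepWeight lam mu m j := by
  simp [evenCoeff]

theorem evenCoeff_two_mul_add_one (m j : ℕ) :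
    evenCoeff lam mu m (2 * j + 1) = (mu - lam) * twoStepWeight lam mu m j := by
  simp [evenCoeff, Nat.add_mod, show (2 * j + 1) / 2 = j by omega]

theorem oddCoeff_two_mul (m j : ℕ) : oddCoeff lam mu m (2 * j) = 0 := by
  simp [oddCoeff]

theorem oddCoeff_two_mul_add_one (m j : ℕ) :
    oddCoeff lam mu m (2 * j + 1) = lam * twoStepWeight lam mu m j := by
  simp [oddCoeff, Nat.add_mod, show (2 * j + 1) / 2 = j by omega]

theorem abs_evenCoeff_le (hlam : 0 < lam) (hmu : 0 < mu) (m i : ℕ) :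
    |evenCoeff lam mu m i| ≤ (lam + mu) ^ i := by
  have hw := twoStepWeight_nonneg hlam.le hmu.le m
  rcases Nat.even_or_odd' i with ⟨j, rfl | rfl⟩
  · rw [evenCoeff_two_mul, abs_of_nonneg (hw j)]
    exact twoStepWeight_le hlam hmu.le m j
  · rw [evenCoeff_two_mul_add_one, abs_mul, abs_of_nonneg (hw j), pow_succ']
    exact mul_le_mul (abs_le.2 ⟨by linarith, by linarith⟩) (twoStepWeight_le hlam hmu.le m j)
      (hw j) (by positivity)

theorem abs_oddCoeff_le (hlam : 0 < lam) (hmu : 0 < mu) (m i : ℕ) :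
    |oddCoeff lam mu m i| ≤ (lam + mu) ^ i := by
  rcases Nat.even_or_odd' i with ⟨j, rfl | rfl⟩
  · rw [oddCoeff_two_mul, abs_zero]
    positivity
  · have hw := twoStepWeight_nonneg hlam.le hmu.le m j
    rw [oddCoeff_two_mul_add_one, abs_of_nonneg (by positivity), pow_succ']
    exact mul_le_mul (by linarith) (twoStepWeight_le hlam hmu.le m j) hw (by positivity)

theorem isExpBounded_evenCoeff (hlam : 0 < lam) (hmu : 0 < mu) (m : ℕ) :
    IsExpBounded (evenCoeff lam mu m) :=
  ⟨1, lam + mu, fun i => (abs_evenCoeff_le hlam hmu m i).trans_eq (one_mul _).symm⟩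

theorem isExpBounded_oddCoeff (hlam : 0 < lam) (hmu : 0 < mu) (m : ℕ) :
    IsExpBounded (oddCoeff lam mu m) :=
  ⟨1, lam + mu, fun i => (abs_oddCoeff_le hlam hmu m i).trans_eq (one_mul _).symm⟩

-- `stateCoeff lam mu n i` is the `i`-th Taylor coefficient of `e^{(λ+μ)t} p_{0,n}(t;λ,μ)`.
noncomputable def stateCoeff (lam mu : ℝ) (n : ℤ) : ℕ → ℝ :=
  if n % 2 = 0 then evenCoeff lam mu (n / 2).natAbs
  else oddCoeff lam mu ((n - 1) / 2).natAbs + oddCoeff lam mu ((n + 1) / 2).natAbs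

theorem stateCoeff_two_mul (d : ℤ) : stateCoeff lam mu (2 * d) = evenCoeff lam mu d.natAbs := by
  simp [stateCoeff]

theorem stateCoeff_two_mul_add_one (d : ℤ) :
    stateCoeff lam mu (2 * d + 1) =
      oddCoeff lam mu d.natAbs + oddCoeff lam mu (d + 1).natAbs := by
  rw [stateCoeff, if_neg (by omega), show (2 * d + 1 - 1) / 2 = d by omega,
    show (2 * d + 1 + 1) / 2 = d + 1 by omega]

theorem isExpBounded_stateCoeff (hlam : 0 < lam) (hmu : 0 < mu) (n : ℤ) :
    IsExpBounded (stateCoeff lam mu n) := by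
  refine ⟨2, lam + mu, fun i => ?_⟩
  rcases Int.even_or_odd' n with ⟨d, rfl | rfl⟩
  · rw [stateCoeff_two_mul]
    linarith [abs_evenCoeff_le hlam hmu d.natAbs i, pow_nonneg (add_pos hlam hmu).le i]
  · rw [stateCoeff_two_mul_add_one, Pi.add_apply]
    linarith [abs_add_le (oddCoeff lam mu d.natAbs i) (oddCoeff lam mu (d + 1).natAbs i),
      abs_oddCoeff_le hlam hmu d.natAbs i, abs_oddCoeff_le hlam hmu (d + 1).natAbs i]

theorem stateCoeff_apply_zero (n : ℤ) : stateCoeff lam mu n 0 = if n = 0 then 1 else 0 := by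
  rcases Int.even_or_odd' n with ⟨d, rfl | rfl⟩
  · simp [stateCoeff_two_mul, evenCoeff, twoStepWeight_zero_right]
  · simp [stateCoeff_two_mul_add_one, oddCoeff]
    omega

theorem stateCoeff_succ_of_even (hlam : lam ≠ 0) {n : ℤ} (hn : Even n) (i : ℕ) :
    stateCoeff lam mu n (i + 1) = (mu - lam) * stateCoeff lam mu n i +
      mu * stateCoeff lam mu (n - 1) i + mu * stateCoeff lam mu (n + 1) i := by
  obtain ⟨d, rfl⟩ := hn
  rw [← two_mul, show 2 * d - 1 = 2 * (d - 1) + 1 by ring, stateCoeff_two_mul,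
    stateCoeff_two_mul_add_one, stateCoeff_two_mul_add_one, sub_add_cancel]
  rcases Nat.even_or_odd' i with ⟨j, rfl | rfl⟩
  · simp only [Pi.add_apply, evenCoeff_two_mul, evenCoeff_two_mul_add_one, oddCoeff_two_mul]
    ring
  · rw [show 2 * j + 1 + 1 = 2 * (j + 1) by ring]
    simp only [Pi.add_apply, evenCoeff_two_mul, evenCoeff_two_mul_add_one,
      oddCoeff_two_mul_add_one]
    linear_combination twoStepWeight_natAbs_succ (mu := mu) hlam d j

theorem stateCoeff_succ_of_odd {n : ℤ} (hn : Odd n) (i : ℕ) :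
    stateCoeff lam mu n (i + 1) = (lam - mu) * stateCoeff lam mu n i +
      lam * stateCoeff lam mu (n - 1) i + lam * stateCoeff lam mu (n + 1) i := by
  obtain ⟨d, rfl⟩ := hn
  rw [add_sub_cancel_right, show 2 * d + 1 + 1 = 2 * (d + 1) by ring, stateCoeff_two_mul,
    stateCoeff_two_mul, stateCoeff_two_mul_add_one]
  rcases Nat.even_or_odd' i with ⟨j, rfl | rfl⟩
  · simp only [Pi.add_apply, evenCoeff_two_mul, oddCoeff_two_mul, oddCoeff_two_mul_add_one]
    ring
  · rw [show 2 * j + 1 + 1 = 2 * (j + 1) by ring]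
    simp only [Pi.add_apply, evenCoeff_two_mul_add_one, oddCoeff_two_mul,
      oddCoeff_two_mul_add_one]
    ring

end Coefficients

section Transition

variable {lam mu : ℝ}

theorem evenSeries_eq_egf (hlam : 0 < lam) (hmu : 0 < mu) (m : ℕ) (t : ℝ) :
    evenSeries (lam * t) ((mu - lam) / lam) (lam / mu) m = egf (evenCoeff lam mu m) t := by
  rw [(isExpBounded_evenCoeff hlam hmu m).egf_eq_tsum_even_add_odd, evenSeries_eq_tsum]
  refine tsum_congr fun j => ?_
  simp only [innerSum_eq_choosePairSum, inv_div, evenCoeff_two_mul, evenCoeff_two_mul_add_one,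
    twoStepWeight, mul_pow]
  field_simp
  ring

theorem oddSeries_eq_egf (hlam : 0 < lam) (hmu : 0 < mu) (m : ℕ) (t : ℝ) :
    oddSeries (lam * t) (lam / mu) m = egf (oddCoeff lam mu m) t := by
  rw [(isExpBounded_oddCoeff hlam hmu m).egf_eq_tsum_even_add_odd, oddSeries_eq_tsum]
  refine tsum_congr fun j => ?_
  simp only [innerSum_eq_choosePairSum, inv_div, oddCoeff_two_mul, oddCoeff_two_mul_add_one,
    twoStepWeight, mul_pow]
  ring

noncomputable def transPFromZero (lam mu t : ℝ) (n : ℤ) : ℝ :=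
  Real.exp (-(lam + mu) * t) * egf (stateCoeff lam mu n) t

theorem pEE_eq_transPFromZero (hlam : 0 < lam) (hmu : 0 < mu) (t : ℝ) (l r : ℤ) :
    pEE lam mu t l r = transPFromZero lam mu t (2 * (r - l)) := by
  rw [pEE, transPFromZero, stateCoeff_two_mul, evenSeries_eq_egf hlam hmu]

theorem pEO_eq_transPFromZero (hlam : 0 < lam) (hmu : 0 < mu) (t : ℝ) (l r : ℤ) :
    pEO lam mu t l r = transPFromZero lam mu t (2 * (r - l) + 1) := by
  rw [pEO, transPFromZero, stateCoeff_two_mul_add_one,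
    egf_add (isExpBounded_oddCoeff hlam hmu _) (isExpBounded_oddCoeff hlam hmu _),
    oddSeries_eq_egf hlam hmu, oddSeries_eq_egf hlam hmu]

theorem pOE_eq_transPFromZero (hlam : 0 < lam) (hmu : 0 < mu) (t : ℝ) (l r : ℤ) :
    pOE lam mu t l r = transPFromZero mu lam t (2 * (r - l - 1) + 1) := by
  rw [sub_right_comm, ← pEO_eq_transPFromZero hmu hlam, pOE, pEO, add_comm mu lam,
    sub_right_comm r 1 l, sub_add_cancel]

theorem pOO_eq_transPFromZero (hlam : 0 < lam) (hmu : 0 < mu) (t : ℝ) (l r : ℤ) :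
    pOO lam mu t l r = transPFromZero mu lam t (2 * (r - l)) := by
  rw [← pEE_eq_transPFromZero hmu hlam, pOO, pEE, add_comm mu lam]

theorem transP_two_mul (hlam : 0 < lam) (hmu : 0 < mu) (t : ℝ) (b n : ℤ) :
    transP lam mu t (2 * b) n = transPFromZero lam mu t (n - 2 * b) := by
  rcases Int.even_or_odd' n with ⟨a, rfl | rfl⟩
  · rw [transP, if_pos (by omega), if_pos (by omega), pEE_eq_transPFromZero hlam hmu]
    congr 1
    omega
  · rw [transP, if_pos (by omega), if_neg (by omega), pEO_eq_transPFromZero hlam hmu]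
    congr 1
    omega

theorem transP_two_mul_add_one (hlam : 0 < lam) (hmu : 0 < mu) (t : ℝ) (b n : ℤ) :
    transP lam mu t (2 * b + 1) n = transPFromZero mu lam t (n - (2 * b + 1)) := by
  rcases Int.even_or_odd' n with ⟨a, rfl | rfl⟩
  · rw [transP, if_neg (by omega), if_pos (by omega), pOE_eq_transPFromZero hlam hmu]
    congr 1
    omega
  · rw [transP, if_neg (by omega), if_neg (by omega), pOO_eq_transPFromZero hlam hmu]
    congr 1
    omega

theorem transPFromZero_zero (n : ℤ) : transPFromZero lam mu 0 n = if n = 0 then 1 else 0 := by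
  rw [transPFromZero, mul_zero, Real.exp_zero, one_mul, egf_apply_zero, stateCoeff_apply_zero]

theorem hasDerivAt_transPFromZero_of_even (hlam : 0 < lam) (hmu : 0 < mu) {n : ℤ} (hn : Even n)
    (t : ℝ) :
    HasDerivAt (fun s => transPFromZero lam mu s n)
      (mu * transPFromZero lam mu t (n - 1) - 2 * lam * transPFromZero lam mu t n +
        mu * transPFromZero lam mu t (n + 1)) t :=
  (hasDerivAt_exp_mul_egf_of_succ (isExpBounded_stateCoeff hlam hmu n)
    (isExpBounded_stateCoeff hlam hmu _) (isExpBounded_stateCoeff hlam hmu _)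
    (stateCoeff_succ_of_even hlam.ne' hn) t).congr_deriv (by simp only [transPFromZero]; ring)

theorem hasDerivAt_transPFromZero_of_odd (hlam : 0 < lam) (hmu : 0 < mu) {n : ℤ} (hn : Odd n)
    (t : ℝ) :
    HasDerivAt (fun s => transPFromZero lam mu s n)
      (lam * transPFromZero lam mu t (n - 1) - 2 * mu * transPFromZero lam mu t n +
        lam * transPFromZero lam mu t (n + 1)) t :=
  (hasDerivAt_exp_mul_egf_of_succ (isExpBounded_stateCoeff hlam hmu n)
    (isExpBounded_stateCoeff hlam hmu _) (isExpBounded_stateCoeff hlam hmu _)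
    (stateCoeff_succ_of_odd hn) t).congr_deriv (by simp only [transPFromZero]; ring)

theorem transP_zero_time (hlam : 0 < lam) (hmu : 0 < mu) (k n : ℤ) :
    transP lam mu 0 k n = if n = k then 1 else 0 := by
  rcases Int.even_or_odd' k with ⟨b, rfl | rfl⟩ <;>
    simp only [transP_two_mul, transP_two_mul_add_one, hlam, hmu, transPFromZero_zero, sub_eq_zero]

theorem hasDerivAt_transP_of_even (hlam : 0 < lam) (hmu : 0 < mu) (k : ℤ) {n : ℤ} (hn : Even n)
    (t : ℝ) :
    HasDerivAt (fun s => transP lam mu s k n)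
      (mu * transP lam mu t k (n - 1) - 2 * lam * transP lam mu t k n +
        mu * transP lam mu t k (n + 1)) t := by
  rcases Int.even_or_odd' k with ⟨b, rfl | rfl⟩
  · simp only [transP_two_mul hlam hmu, sub_right_comm n 1, add_sub_right_comm n 1]
    exact hasDerivAt_transPFromZero_of_even hlam hmu (hn.sub (even_two_mul b)) t
  · simp only [transP_two_mul_add_one hlam hmu, sub_right_comm n 1, add_sub_right_comm n 1]
    exact hasDerivAt_transPFromZero_of_odd hmu hlam (hn.sub_odd (odd_two_mul_add_one b)) t

theorem hasDerivAt_transP_of_odd (hlam : 0 < lam) (hmu : 0 < mu) (k : ℤ) {n : ℤ} (hn : Odd n)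
    (t : ℝ) :
    HasDerivAt (fun s => transP lam mu s k n)
      (lam * transP lam mu t k (n - 1) - 2 * mu * transP lam mu t k n +
        lam * transP lam mu t k (n + 1)) t := by
  rcases Int.even_or_odd' k with ⟨b, rfl | rfl⟩
  · simp only [transP_two_mul hlam hmu, sub_right_comm n 1, add_sub_right_comm n 1]
    exact hasDerivAt_transPFromZero_of_odd hlam hmu (hn.sub_even (even_two_mul b)) t
  · simp only [transP_two_mul_add_one hlam hmu, sub_right_comm n 1, add_sub_right_comm n 1]
    exact hasDerivAt_transPFromZero_of_even hmu hlam (hn.sub_odd (odd_two_mul_add_one b)) t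

end Transition

/-- The transition probabilities are differentiable on `[0,∞)`, satisfy the Kronecker-delta
initial condition, and satisfy the Kolmogorov forward equations. -/
theorem forward_equations (lam mu : ℝ) (hlam : 0 < lam) (hmu : 0 < mu) (k : ℤ) :
    (∀ n : ℤ, DifferentiableOn ℝ (fun t : ℝ => transP lam mu t k n) (Set.Ici 0)) ∧
    (∀ n : ℤ, transP lam mu 0 k n = if n = k then 1 else 0) ∧
    (∀ t : ℝ, 0 ≤ t → ∀ n : ℤ,
      derivWithin (fun s : ℝ => transP lam mu s k (2 * n)) (Set.Ici 0) t =
        mu * transP lam mu t k (2 * n - 1) - 2 * lam * transP lam mu t k (2 * n) +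
          mu * transP lam mu t k (2 * n + 1) ∧
      derivWithin (fun s : ℝ => transP lam mu s k (2 * n + 1)) (Set.Ici 0) t =
        lam * transP lam mu t k (2 * n) - 2 * mu * transP lam mu t k (2 * n + 1) +
          lam * transP lam mu t k (2 * n + 2)) := by
  refine ⟨fun n t _ => ?_, transP_zero_time hlam hmu k, fun t ht n => ⟨?_, ?_⟩⟩
  · rcases Int.even_or_odd n with hn | hn
    · exact (hasDerivAt_transP_of_even hlam hmu k hn t).differentiableAt.differentiableWithinAt
    · exact (hasDerivAt_transP_of_odd hlam hmu k hn t).differentiableAt.differentiableWithinAt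
  · exact (hasDerivAt_transP_of_even hlam hmu k (even_two_mul n) t).hasDerivWithinAt.derivWithin
      (uniqueDiffOn_Ici 0 t ht)
  · have h := hasDerivAt_transP_of_odd hlam hmu k (odd_two_mul_add_one n) t
    rw [add_sub_cancel_right, add_assoc, one_add_one_eq_two] at h
    exact h.hasDerivWithinAt.derivWithin (uniqueDiffOn_Ici 0 t ht)
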